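/- Symmetry of the Cartan product g·Y₂(β): Z(x,1,1,α,β,γ) = Z(x,1,1,β,α,γ) for all real x,α,β,γ where all sinh denominators in the defining product are nonzero, i.e. the universal quantum dimension of the Cartan product of the adjoint and Y₂(β) is symmetric under exchange of the first two Vogel parameters. -/
import Mathlib


/-- Contribution B(x,n,α,β,γ) of the roots with unit scalar product with θ
(Section 2 of the paper). -/
noncomputable def Bfac (x : ℝ) (n : ℕ) (a b g : ℝ) : ℝ :=
  ∏ j ∈ Finset.range n,
    (Real.sinh ((g + 2*b - ((j:ℝ) + 1 - 3) * a) * x / 4) /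
        Real.sinh ((g - ((j:ℝ) + 1 - 1) * a) * x / 4)) *
    (Real.sinh ((2*g + b - ((j:ℝ) + 1 - 3) * a) * x / 4) /
        Real.sinh ((b - ((j:ℝ) + 1 - 1) * a) * x / 4)) *
    (Real.sinh ((2*g + 2*b - ((j:ℝ) + 1 - 4) * a) * x / 4) /
        Real.sinh (-((j:ℝ) + 1) * a * x / 4))

/-- Contribution A(x,n,α,β,γ) of the black roots. -/
noncomputable def Afac (x : ℝ) (n : ℕ) (a b g : ℝ) : ℝ :=
  ∏ j ∈ Finset.range n,
    (Real.sinh ((2*g + 3*a - ((j:ℝ) + 1) * a) * x / 4) /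
        Real.sinh ((2*b + a - ((j:ℝ) + 1) * a) * x / 4)) *
    (Real.sinh ((2*g + b + 4*a - ((j:ℝ) + 1) * a) * x / 4) /
        Real.sinh ((b - ((j:ℝ) + 1) * a) * x / 4)) *
    (Real.sinh ((2*b + g + 3*a - ((j:ℝ) + 1) * a) * x / 4) /
        Real.sinh ((g + a - ((j:ℝ) + 1) * a) * x / 4))

/-- Contribution C₁(x,n,α,β,γ) of the green roots. -/
noncomputable def C1fac (x : ℝ) (n : ℕ) (a b g : ℝ) : ℝ :=
  ∏ j ∈ Finset.range n,
    Real.sinh ((2*b + 2*g + 4*a - ((j:ℝ) + 1) * a) * x / 4) /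
      Real.sinh ((2*g + 3*a - ((j:ℝ) + 1) * a) * x / 4)

/-- Contribution C₂(x,n,α,β,γ) of the red roots. -/
noncomputable def C2fac (x : ℝ) (n : ℕ) (a b : ℝ) : ℝ :=
  ∏ j ∈ Finset.range n,
    Real.sinh ((-a - 2*b + a * ((j:ℝ) + 1)) * x / 4) /
      Real.sinh (a * ((j:ℝ) + 1) * x / 4)

/-- Contribution F(x,k,l,α,β,γ) of g₂₀, g₀₂ and the remaining colored roots. -/
noncomputable def Ffac (x : ℝ) (k l : ℕ) (a b g : ℝ) : ℝ :=
  (Real.sinh ((2*b + 2*g - (2*(k:ℝ) + 2*(l:ℝ) - 3) * a) * x / 4) /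
      Real.sinh ((2*b + 2*g + 3*a) * x / 4)) *
  (Real.sinh ((2*g - (2*(l:ℝ) - 3) * a) * x / 4) / Real.sinh ((2*g + 3*a) * x / 4)) *
  (Real.sinh ((b + 2*g - ((k:ℝ) + 2*(l:ℝ) - 3) * a) * x / 4) /
      Real.sinh ((b + 2*g + 3*a) * x / 4)) *
  (Real.sinh ((b - (k:ℝ) * a) * x / 4) / Real.sinh (b * x / 4))

/-- Universal quantum dimension Z(x,k,l,α,β,γ) of the Cartan product
gᵏ·Y₂(β)ˡ: Z = F·A·B̃·C₁·C₂, with B̃(x,l,α,β,γ) = B(x,l,α,β,γ−β). -/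
noncomputable def Zdim (x : ℝ) (k l : ℕ) (a b g : ℝ) : ℝ :=
  Ffac x k l a b g * Afac x (k + l) a b g * Bfac x l a b (g - b) *
    C1fac x (k + 2*l) a b g * C2fac x k a b


set_option maxHeartbeats 3200000 in
private lemma Zval (x a b g : ℝ)
    (h1 : Real.sinh ((2*b + 2*g + 3*a) * x / 4) ≠ 0)
    (h2 : Real.sinh ((2*g + 3*a) * x / 4) ≠ 0)
    (h3 : Real.sinh ((b + 2*g + 3*a) * x / 4) ≠ 0)
    (h4 : Real.sinh (b * x / 4) ≠ 0)
    (h5 : Real.sinh (2*b * x / 4) ≠ 0)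
    (h6 : Real.sinh ((2*b - a) * x / 4) ≠ 0)
    (h7 : Real.sinh ((b - a) * x / 4) ≠ 0)
    (h8 : Real.sinh ((b - 2*a) * x / 4) ≠ 0)
    (h9 : Real.sinh (g * x / 4) ≠ 0)
    (h10 : Real.sinh ((g - a) * x / 4) ≠ 0)
    (h11 : Real.sinh ((g - b) * x / 4) ≠ 0)
    (h12 : Real.sinh (a * x / 4) ≠ 0)
    (h13 : Real.sinh ((2*g + 2*a) * x / 4) ≠ 0)
    (h14 : Real.sinh ((2*g + a) * x / 4) ≠ 0)
    (h15 : Real.sinh (2*g * x / 4) ≠ 0) :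
    Zdim x 1 1 a b g =
      (Real.sinh ((2*b + 2*g - a) * x / 4) * Real.sinh ((2*g + a) * x / 4) *
        Real.sinh ((b + 2*g) * x / 4) * Real.sinh ((2*a + 2*b + g) * x / 4) *
        Real.sinh ((2*a + b + 2*g) * x / 4) * Real.sinh ((a + 2*b + g) * x / 4) *
        Real.sinh ((2*a + b + g) * x / 4) * Real.sinh ((2*a - b + 2*g) * x / 4) *
        Real.sinh ((2*a + 2*b + 2*g) * x / 4) * Real.sinh ((a + 2*b + 2*g) * x / 4)) /
      (Real.sinh (b * x / 4) ^ 2 * Real.sinh (a * x / 4) ^ 2 * Real.sinh (g * x / 4) *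
        Real.sinh (2*g * x / 4) * Real.sinh ((2*b - a) * x / 4) *
        Real.sinh ((b - 2*a) * x / 4) * Real.sinh ((g - a) * x / 4) *
        Real.sinh ((g - b) * x / 4)) := by
  have e13 : Real.sinh ((2*g + 3*a - a) * x / 4) ≠ 0 := by
    rw [show (2*g + 3*a - a) * x / 4 = (2*g + 2*a) * x / 4 by ring]; exact h13
  have e14 : Real.sinh ((2*g + 3*a - 2*a) * x / 4) ≠ 0 := by
    rw [show (2*g + 3*a - 2*a) * x / 4 = (2*g + a) * x / 4 by ring]; exact h14
  have e6 : Real.sinh ((2*b + a - 2*a) * x / 4) ≠ 0 := by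
    rw [show (2*b + a - 2*a) * x / 4 = (2*b - a) * x / 4 by ring]; exact h6
  have e10 : Real.sinh ((g + a - 2*a) * x / 4) ≠ 0 := by
    rw [show (g + a - 2*a) * x / 4 = (g - a) * x / 4 by ring]; exact h10
  have ea : Real.sinh (-(a*x) / 4) ≠ 0 := by
    rw [show -(a*x) / 4 = -(a * x / 4) by ring, Real.sinh_neg, neg_ne_zero]; exact h12
  simp only [Zdim, Ffac, Afac, Bfac, C1fac, C2fac, show 1+1=2 from rfl,
    show 1+2*1=3 from rfl, Finset.prod_range_succ, Finset.prod_range_zero,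
    Nat.cast_zero, Nat.cast_one, Nat.cast_ofNat, one_mul]
  norm_num
  simp only [div_mul_div_comm]
  rw [div_eq_div_iff (by (repeat' apply mul_ne_zero) <;> assumption)
    (mul_ne_zero (mul_ne_zero (mul_ne_zero (mul_ne_zero (mul_ne_zero (mul_ne_zero
      (mul_ne_zero (pow_ne_zero 2 h4) (pow_ne_zero 2 h12)) h9) h15) h6) h8) h10) h11)]
  rw [show ((-a - 2*b + a) * x / 4) = -(2*b * x / 4) by ring, Real.sinh_neg,
      show (-(a*x) / 4) = -(a * x / 4) by ring, Real.sinh_neg]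
  ring_nf

/-- The universal quantum dimension of the Cartan product g·Y₂(β) is
symmetric under exchange of the first two Vogel parameters. -/
theorem stmt_18 (x a b g : ℝ)
    (d1 : Real.sinh ((2*b + 2*g + 3*a) * x / 4) ≠ 0)
    (d2 : Real.sinh ((2*g + 3*a) * x / 4) ≠ 0)
    (d3 : Real.sinh ((b + 2*g + 3*a) * x / 4) ≠ 0)
    (d4 : Real.sinh (b * x / 4) ≠ 0)
    (d5 : Real.sinh (2*b * x / 4) ≠ 0)
    (d6 : Real.sinh ((2*b - a) * x / 4) ≠ 0)
    (d7 : Real.sinh ((b - a) * x / 4) ≠ 0)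
    (d8 : Real.sinh ((b - 2*a) * x / 4) ≠ 0)
    (d9 : Real.sinh (g * x / 4) ≠ 0)
    (d10 : Real.sinh ((g - a) * x / 4) ≠ 0)
    (d11 : Real.sinh ((g - b) * x / 4) ≠ 0)
    (d12 : Real.sinh (a * x / 4) ≠ 0)
    (d13 : Real.sinh ((2*g + 2*a) * x / 4) ≠ 0)
    (d14 : Real.sinh ((2*g + a) * x / 4) ≠ 0)
    (d15 : Real.sinh (2*g * x / 4) ≠ 0)
    (d16 : Real.sinh ((2*a + 2*g + 3*b) * x / 4) ≠ 0)
    (d17 : Real.sinh ((2*g + 3*b) * x / 4) ≠ 0)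
    (d18 : Real.sinh ((a + 2*g + 3*b) * x / 4) ≠ 0)
    (d19 : Real.sinh (2*a * x / 4) ≠ 0)
    (d20 : Real.sinh ((2*a - b) * x / 4) ≠ 0)
    (d21 : Real.sinh ((a - b) * x / 4) ≠ 0)
    (d22 : Real.sinh ((a - 2*b) * x / 4) ≠ 0)
    (d23 : Real.sinh ((2*g + 2*b) * x / 4) ≠ 0)
    (d24 : Real.sinh ((2*g + b) * x / 4) ≠ 0) :
    Zdim x 1 1 a b g = Zdim x 1 1 b a g := by
  rw [Zval x a b g d1 d2 d3 d4 d5 d6 d7 d8 d9 d10 d11 d12 d13 d14 d15,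
      Zval x b a g d16 d17 d18 d12 d19 d20 d21 d22 d9 d11 d10 d4 d23 d24 d15]
  rw [show Real.sinh ((2*a - b) * x / 4) = -Real.sinh ((b - 2*a) * x / 4) by
        rw [← Real.sinh_neg]; ring_nf,
      show Real.sinh ((a - 2*b) * x / 4) = -Real.sinh ((2*b - a) * x / 4) by
        rw [← Real.sinh_neg]; ring_nf]
  ring_nf
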